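/- For the 2-graph with one vertex, edges e₁,e₂ (blue) and f₁,f₂ (red), and factorization rules identifying Z(eᵢ) with Z(fᵢ), the periodicity group equals ℤ·(1,−1): it contains (1,−1), and contains no element outside ℤ(1,−1). -/

import Mathlib

/-- Comparing a sequence that is `a` only at position `m` with its shifts separates shifts by
different amounts. -/
theorem shift_eq_shift_iff {α : Type*} [Nontrivial α] {m n : ℕ} :
    (∀ x : ℕ → α, (fun i => x (i + m)) = (fun i => x (i + n))) ↔ m = n := by
  refine ⟨fun h => ?_, fun h _ => h ▸ rfl⟩
  obtain ⟨a, b, hab⟩ := exists_pair_ne α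
  by_contra hmn
  have h0 := congrFun (h fun i => if i = m then a else b) 0
  simp only [Nat.zero_add, if_neg (Ne.symm hmn)] at h0
  exact hab h0

/-- The shift space `(Fin 2)^ℕ` models the infinite paths of the 2-graph, the shift by the
degree `(a, b)` being the shift of symbol sequences by `a + b`. -/
theorem stmt18 :
    {p : ℤ × ℤ | ∃ a b c d : ℕ, p = ((a : ℤ) - c, (b : ℤ) - d) ∧
        ∀ x : ℕ → Fin 2, (fun i => x (i + (a + b))) = (fun i => x (i + (c + d)))}
      = {p : ℤ × ℤ | ∃ z : ℤ, p = (z, -z)} := by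
  ext p
  simp only [Set.mem_ofPred_eq, shift_eq_shift_iff]
  constructor
  · rintro ⟨a, b, c, d, rfl, hdeg⟩
    exact ⟨a - c, by ext <;> omega⟩
  · rintro ⟨z, rfl⟩
    refine ⟨z.toNat, (-z).toNat, (-z).toNat, z.toNat, ?_, Nat.add_comm _ _⟩
    ext <;> omega
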